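/- For w ∈ ass_m and 1 ≤ l ≤ n, define the operator ad_w^{(l)} on edk_{m,n} ℚ-linearly in w by ad_1^{(l)}(ξ) := ξ and ad_{x_{p_1}⋯x_{p_d}}^{(l)}(ξ) := [a_{p_1 l}, [a_{p_2 l}, [ …, [a_{p_d l}, ξ] … ]]]. Then for all w ∈ ass_m and all 1 ≤ j ≠ k ≤ n, ad_w^{(k)}(c_{jk}) = ad_{ι(w)}^{(j)}(c_{jk}) in edk_{m,n}. -/

import Mathlib

noncomputable section

open scoped TensorProduct

attribute [local instance 100] LieRing.ofAssociativeRing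

/-- The free unital associative algebra over `ℚ` on `N` generators. -/
abbrev Ass (N : ℕ) : Type := FreeAlgebra ℚ (Fin N)

/-- The `i`-th generator `x_i`. -/
def gen {N : ℕ} (i : Fin N) : Ass N := FreeAlgebra.ι ℚ i

/-- The monomial (word) associated to a list of generator indices. -/
def wordProd {N : ℕ} (l : List (Fin N)) : Ass N := (l.map gen).prod

/-- Extend a function on words (monomials) to a `ℚ`-linear map on the free algebra,
using the monomial basis. -/
def liftWord {N : ℕ} {A : Type} [AddCommGroup A] [Module ℚ A]
    (f : List (Fin N) → A) : Ass N →ₗ[ℚ] A :=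
  (FreeAlgebra.basisFreeMonoid ℚ (Fin N)).constr ℚ fun w => f w.toList

/-- `μ_gr` on a word. -/
def muWord {N : ℕ} : List (Fin N) → Ass N
  | [] => 0
  | [_] => 0
  | a :: b :: t => (if a = b then -(wordProd (a :: t)) else 0) + gen a * muWord (b :: t)

/-- The linearized self-intersection operation `μ_gr`. -/
def muGr (N : ℕ) : Ass N →ₗ[ℚ] Ass N := liftWord muWord

/-- The antipode: the anti-automorphism `ι` with `ι(x_i) = -x_i`, as a linear map. -/
def iotaMap (N : ℕ) : Ass N →ₗ[ℚ] Ass N :=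
  liftWord fun l => ((-1 : ℚ) ^ l.length) • wordProd l.reverse

/-- The (right) partial derivative `∂_i`, characterized on `lie_N` by
`a = Σ_i (∂_i a) x_i`. -/
def partialD {N : ℕ} (i : Fin N) : Ass N →ₗ[ℚ] Ass N :=
  liftWord fun l =>
    match l.getLast? with
    | some a => if a = i then wordProd l.dropLast else 0
    | none => 0

/-- `η_gr` on a pair of words. -/
def etaWord {N : ℕ} (l r : List (Fin N)) : Ass N :=
  match l.getLast?, r with
  | some a, b :: t => if a = b then -(wordProd (l.dropLast ++ a :: t)) else 0
  | _, _ => 0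

/-- The linearized homotopy intersection form `η_gr`. -/
def etaGr (N : ℕ) : Ass N →ₗ[ℚ] Ass N →ₗ[ℚ] Ass N :=
  liftWord fun l => liftWord fun r => etaWord l r

/-- Degree-`k` homogeneous part of a free algebra (word-length grading). -/
def homogS (X : Type) (k : ℕ) : Submodule ℚ (FreeAlgebra ℚ X) :=
  Submodule.span ℚ {z | ∃ l : List X, l.length = k ∧ z = (l.map (FreeAlgebra.ι ℚ)).prod}

/-- The projection onto the degree-`k` homogeneous component. -/
def homogComp {N : ℕ} (k : ℕ) : Ass N →ₗ[ℚ] Ass N :=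
  liftWord fun l => if l.length = k then wordProd l else 0

/-- The free Lie algebra on `x_1, …, x_N`, as the Lie subalgebra of `Ass N`
(with the commutator bracket) generated by the generators. -/
def lieN (N : ℕ) : LieSubalgebra ℚ (Ass N) :=
  LieSubalgebra.lieSpan ℚ (Ass N) (Set.range (gen (N := N)))

/-- The generator `x_i` as an element of `lie_N`. -/
def genL (N : ℕ) (i : Fin N) : lieN N :=
  ⟨gen i, LieSubalgebra.subset_lieSpan ⟨i, rfl⟩⟩

/-- Substitution: the algebra endomorphism of `ass_2` with `x ↦ p`, `y ↦ q`. -/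
def sub2 (p q : Ass 2) : Ass 2 →ₐ[ℚ] Ass 2 := FreeAlgebra.lift ℚ ![p, q]

/-- `x`. -/
def xA : Ass 2 := gen 0
/-- `y`. -/
def yA : Ass 2 := gen 1

/-- Equation (E1): `φ(y,0) − φ(x+y,0) = 0`. -/
def E1 (φ : Ass 2) : Prop := sub2 yA 0 φ - sub2 (xA + yA) 0 φ = 0

/-- Equation (E2): `(∂_y φ) + (∂_y φ)(y,0) − (∂_y φ)(x+y,0) − R(φ) = 0`,
where `R` is the restriction of `μ_gr` to `lie_2`. -/
def E2 (φ : Ass 2) : Prop :=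
  partialD 1 φ + sub2 yA 0 (partialD 1 φ) - sub2 (xA + yA) 0 (partialD 1 φ) - muGr 2 φ = 0

/-- Equation (E3): `[x, φ(y,x)] + [y, φ(x,y)] = 0`. -/
def E3 (φ : Ass 2) : Prop := ⁅xA, sub2 yA xA φ⁆ + ⁅yA, φ⁆ = 0

/-- `ν^em(φ) = (φ(y,x), φ(x,y))`. -/
def nuEm (φ : Ass 2) : Fin 2 → Ass 2 := ![sub2 yA xA φ, φ]

/-- The space `grt_1^em` of solutions to the linearized emergent equations. -/
def grt1em : Set (Ass 2) := {φ | φ ∈ lieN 2 ∧ E1 φ ∧ E2 φ ∧ E3 φ}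

/-- The derivation `ρ(ũ)` on a word. -/
def rhoWord {N : ℕ} (u : Fin N → Ass N) : List (Fin N) → Ass N
  | [] => 0
  | a :: t => ⁅gen a, u a⁆ * wordProd t + gen a * rhoWord u t

/-- The tangential derivation `ρ(ũ)`, determined by `ρ(ũ)(x_i) = [x_i, u_i]`. -/
def rho {N : ℕ} (u : Fin N → Ass N) : Ass N →ₗ[ℚ] Ass N := liftWord (rhoWord u)

/-- The span of commutators in `ass_N`. -/
def trRel (N : ℕ) : Submodule ℚ (Ass N) :=
  Submodule.span ℚ {z | ∃ a b : Ass N, z = a * b - b * a}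

/-- The trace space `tr_N = ass_N/[ass_N, ass_N]`. -/
abbrev Tr (N : ℕ) : Type := Ass N ⧸ trRel N

/-- The projection `|·| : ass_N → tr_N`. -/
def trM (N : ℕ) : Ass N →ₗ[ℚ] Tr N := (trRel N).mkQ

/-- The divergence `div(ũ) = Σ_i |x_i (∂_i u_i)|`. -/
def divergence {N : ℕ} (u : Fin N → Ass N) : Tr N :=
  ∑ i, trM N (gen i * partialD i (u i))

/-- `ũ ∈ tder_N`: all components lie in `lie_N`. -/
def IsTDer {N : ℕ} (u : Fin N → Ass N) : Prop := ∀ i, u i ∈ lieN N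

/-- `ũ ∈ sder_N`. -/
def IsSDer {N : ℕ} (u : Fin N → Ass N) : Prop := IsTDer u ∧ rho u (∑ i, gen i) = 0

/-- `ũ ∈ krv_N`. -/
def IsKRV {N : ℕ} (u : Fin N → Ass N) : Prop :=
  IsSDer u ∧ ∃ f : Fin (N + 1) → Polynomial ℚ,
    divergence u =
      trM N (Polynomial.aeval (∑ i, gen i) (f 0)) +
        ∑ i : Fin N, trM N (Polynomial.aeval (gen i) (f i.succ))

/-- `ũ ∈ krv_N^0`. -/
def IsKRV0 {N : ℕ} (u : Fin N → Ass N) : Prop :=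
  IsSDer u ∧ ∃ cf : Fin N → ℚ, divergence u = ∑ i, cf i • trM N (gen i)

/-- The swap `u(x,y) ↦ u(y,x)`. -/
def swapA : Ass 2 →ₐ[ℚ] Ass 2 := sub2 yA xA

/-- `ũ ∈ krv_2^sym`. -/
def IsKRVsym (u : Fin 2 → Ass 2) : Prop := IsKRV u ∧ u 1 = swapA (u 0)


/-- The coproduct `Δ` on `ass_N`, with `Δ(x_i) = x_i ⊗ 1 + 1 ⊗ x_i`. -/
def comulA (N : ℕ) : Ass N →ₐ[ℚ] (Ass N ⊗[ℚ] Ass N) :=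
  FreeAlgebra.lift ℚ fun i => gen i ⊗ₜ[ℚ] (1 : Ass N) + (1 : Ass N) ⊗ₜ[ℚ] gen i

/-- `μ_{r,gr} = ((|·|∘mult) ⊗ id) ∘ (id ⊗ ((ι ⊗ id) ∘ Δ)) ∘ (id ⊗ μ_gr) ∘ Δ`. -/
def muR (N : ℕ) : Ass N →ₗ[ℚ] Tr N ⊗[ℚ] Ass N :=
  (TensorProduct.map ((trM N).comp (LinearMap.mul' ℚ (Ass N))) LinearMap.id).comp <|
    ((TensorProduct.assoc ℚ (Ass N) (Ass N) (Ass N)).symm.toLinearMap).comp <|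
      (TensorProduct.map LinearMap.id
          ((TensorProduct.map (iotaMap N) LinearMap.id).comp (comulA N).toLinearMap)).comp <|
        (TensorProduct.map LinearMap.id (muGr N)).comp (comulA N).toLinearMap

/-- `Alt(a ⊗ b) = a ⊗ b - b ⊗ a`. -/
def altMap (N : ℕ) : Tr N ⊗[ℚ] Tr N →ₗ[ℚ] Tr N ⊗[ℚ] Tr N :=
  LinearMap.id - (TensorProduct.comm ℚ (Tr N) (Tr N)).toLinearMap

/-- The linearized Turaev cobracket `δ_gr = Alt ∘ (id ⊗ |·|) ∘ μ_{r,gr}`. -/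
def Dgr (N : ℕ) : Ass N →ₗ[ℚ] Tr N ⊗[ℚ] Tr N :=
  (altMap N).comp ((TensorProduct.map LinearMap.id (trM N)).comp (muR N))

/-- Index type of the generators `t_{pq}` (`p ≠ q`) of the Drinfeld–Kohno Lie algebra. -/
def dkGenIdx (N : ℕ) : Type := {pq : Fin N × Fin N // pq.1 ≠ pq.2}

abbrev FLdk (N : ℕ) := FreeLieAlgebra ℚ (dkGenIdx N)

def tFree {N : ℕ} (p q : Fin N) (h : p ≠ q) : FLdk N := FreeLieAlgebra.of ℚ ⟨(p, q), h⟩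

/-- The defining relations of `dk_N`: symmetry, commutation and 4T. -/
def dkRels (N : ℕ) : Set (FLdk N) :=
  {z | ∃ (p q : Fin N) (h : p ≠ q), z = tFree p q h - tFree q p h.symm} ∪
  {z | ∃ (p q r s : Fin N) (hpq : p ≠ q) (hrs : r ≠ s),
      p ≠ r ∧ p ≠ s ∧ q ≠ r ∧ q ≠ s ∧ z = ⁅tFree p q hpq, tFree r s hrs⁆} ∪
  {z | ∃ (p q r : Fin N) (hpq : p ≠ q) (hqr : q ≠ r) (hpr : p ≠ r),
      z = ⁅tFree p q hpq + tFree q r hqr, tFree p r hpr⁆}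

def dkIdeal (N : ℕ) : LieIdeal ℚ (FLdk N) := LieSubmodule.lieSpan ℚ (FLdk N) (dkRels N)

/-- The Drinfeld–Kohno Lie algebra `dk_N`. -/
abbrev dk (N : ℕ) := FLdk N ⧸ dkIdeal N

/-- The generator `t_{pq}` of `dk_N`. -/
def tGen {N : ℕ} (p q : Fin N) (h : p ≠ q) : dk N :=
  LieSubmodule.Quotient.mk (N := dkIdeal N) (tFree p q h)

/-- Index type of the generators of the mixed Drinfeld–Kohno Lie algebra `dk_{m,n}`:
pairs of distinct indices in `Fin (m+n)`, not both poles (i.e., not both `< m`). -/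
def MIdx (m n : ℕ) : Type :=
  {pq : Fin (m + n) × Fin (m + n) // pq.1 ≠ pq.2 ∧ (m ≤ (pq.1 : ℕ) ∨ m ≤ (pq.2 : ℕ))}

abbrev FLmix (m n : ℕ) := FreeLieAlgebra ℚ (MIdx m n)

def tMix {m n : ℕ} (p q : Fin (m + n)) (h : p ≠ q)
    (hm : m ≤ (p : ℕ) ∨ m ≤ (q : ℕ)) : FLmix m n :=
  FreeLieAlgebra.of ℚ ⟨(p, q), h, hm⟩

/-- The defining relations of `dk_{m,n}`: exactly the symmetry, commutation and 4T relations
of `dk_{m+n}` involving only mixed pairs. -/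
def mixRels (m n : ℕ) : Set (FLmix m n) :=
  {z | ∃ (p q : Fin (m + n)) (h : p ≠ q) (hm : m ≤ (p : ℕ) ∨ m ≤ (q : ℕ)),
      z = tMix p q h hm - tMix q p h.symm hm.symm} ∪
  {z | ∃ (p q r s : Fin (m + n)) (hpq : p ≠ q) (hmpq : m ≤ (p : ℕ) ∨ m ≤ (q : ℕ))
      (hrs : r ≠ s) (hmrs : m ≤ (r : ℕ) ∨ m ≤ (s : ℕ)),
      p ≠ r ∧ p ≠ s ∧ q ≠ r ∧ q ≠ s ∧ z = ⁅tMix p q hpq hmpq, tMix r s hrs hmrs⁆} ∪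
  {z | ∃ (p q r : Fin (m + n)) (hpq : p ≠ q) (hmpq : m ≤ (p : ℕ) ∨ m ≤ (q : ℕ))
      (hqr : q ≠ r) (hmqr : m ≤ (q : ℕ) ∨ m ≤ (r : ℕ))
      (hpr : p ≠ r) (hmpr : m ≤ (p : ℕ) ∨ m ≤ (r : ℕ)),
      z = ⁅tMix p q hpq hmpq + tMix q r hqr hmqr, tMix p r hpr hmpr⁆}

def mixIdeal (m n : ℕ) : LieIdeal ℚ (FLmix m n) :=
  LieSubmodule.lieSpan ℚ (FLmix m n) (mixRels m n)

/-- The mixed Drinfeld–Kohno Lie algebra `dk_{m,n}`. -/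
abbrev dkmn (m n : ℕ) := FLmix m n ⧸ mixIdeal m n

lemma castAdd_ne_natAdd {m n : ℕ} (i : Fin m) (j : Fin n) :
    Fin.castAdd n i ≠ Fin.natAdd m j := by
  intro h
  have hv := congrArg Fin.val h
  simp only [Fin.coe_castAdd, Fin.coe_natAdd] at hv
  have := i.isLt
  omega

lemma natAdd_ne {m n : ℕ} {u v : Fin n} (h : u ≠ v) :
    Fin.natAdd m u ≠ Fin.natAdd m v := by
  intro hh
  exact h (by
    have hv := congrArg Fin.val hh
    simp only [Fin.coe_natAdd] at hv
    exact Fin.ext (by omega))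

lemma natAdd_le_left (m : ℕ) {n : ℕ} (j : Fin n) : m ≤ (Fin.natAdd m j : ℕ) := by
  simp only [Fin.coe_natAdd]; omega

/-- The generator `a_{ij}` of `dk_{m,n}` (0-indexed): `a_{ij} = t_{i(m+j)}`. -/
def aG {m n : ℕ} (i : Fin m) (j : Fin n) : dkmn m n :=
  LieSubmodule.Quotient.mk (N := mixIdeal m n)
    (tMix (Fin.castAdd n i) (Fin.natAdd m j) (castAdd_ne_natAdd i j)
      (Or.inr (natAdd_le_left m j)))

/-- The generator `c_{ij}` of `dk_{m,n}` (0-indexed): `c_{ij} = t_{(m+i)(m+j)}`. -/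
def cG {m n : ℕ} (u v : Fin n) (h : u ≠ v) : dkmn m n :=
  LieSubmodule.Quotient.mk (N := mixIdeal m n)
    (tMix (Fin.natAdd m u) (Fin.natAdd m v) (natAdd_ne h)
      (Or.inl (natAdd_le_left m u)))

/-- The Lie ideal `c` of `dk_{m,n}` generated by the `c_{ij}`. -/
def cId (m n : ℕ) : LieIdeal ℚ (dkmn m n) :=
  LieSubmodule.lieSpan ℚ (dkmn m n) {z | ∃ (u v : Fin n) (h : u ≠ v), z = cG u v h}

/-- The Lie ideal `[c,c]`. -/
def ccId (m n : ℕ) : LieIdeal ℚ (dkmn m n) := ⁅cId m n, cId m n⁆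

/-- The emergent Drinfeld–Kohno Lie algebra `edk_{m,n} = dk_{m,n}/[c,c]`. -/
abbrev edk (m n : ℕ) := dkmn m n ⧸ ccId m n

/-- Projection `dk_{m,n} → edk_{m,n}` as a function. -/
def eprojF (m n : ℕ) : dkmn m n → edk m n := LieSubmodule.Quotient.mk (N := ccId m n)

/-- Projection `dk_{m,n} → edk_{m,n}` as a `ℚ`-linear map. -/
def eproj (m n : ℕ) : dkmn m n →ₗ[ℚ] edk m n := (ccId m n).toSubmodule.mkQ

/-- `a_{ij}` in `edk_{m,n}`. -/
def aGE {m n : ℕ} (i : Fin m) (j : Fin n) : edk m n := eprojF m n (aG i j)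

/-- `c_{ij}` in `edk_{m,n}`. -/
def cGE {m n : ℕ} (u v : Fin n) (h : u ≠ v) : edk m n := eprojF m n (cG u v h)

/-- The canonical Lie algebra map `FreeLieAlgebra ℚ (Fin m) → ass_m`,
whose image is `lie_m`. -/
def toAssL (m : ℕ) : FreeLieAlgebra ℚ (Fin m) →ₗ⁅ℚ⁆ FreeAlgebra ℚ (Fin m) :=
  FreeLieAlgebra.lift ℚ (FreeAlgebra.ι ℚ)

/-- `u ↦ u_i` (at `dk` level): the Lie algebra map with `x_p ↦ a_{pi}`. -/
def uEldk {m n : ℕ} (i : Fin n) : FreeLieAlgebra ℚ (Fin m) →ₗ⁅ℚ⁆ dkmn m n :=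
  FreeLieAlgebra.lift ℚ fun p => aG p i

/-- `u ↦ u_i`: the Lie algebra map `lie_m → edk_{m,n}` with `x_p ↦ a_{pi}`. -/
def uEl {m n : ℕ} (i : Fin n) : FreeLieAlgebra ℚ (Fin m) →ₗ⁅ℚ⁆ edk m n :=
  FreeLieAlgebra.lift ℚ fun p => aGE p i

/-- Iterated bracketing `[a_{p₁ j}, [a_{p₂ j}, [… , [a_{p_d j}, ξ]…]]]`. -/
def adWApply {m n : ℕ} (j : Fin n) : List (Fin m) → edk m n → edk m n
  | [], ξ => ξ
  | p :: t, ξ => ⁅aGE p j, adWApply j t ξ⁆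


/-- `w ↦ w_{uv}`: the linear map `ass_m → edk_{m,n}` with
`1 ↦ c_{uv}` and `(x_{p₁}⋯x_{p_d}) ↦ [a_{p₁ v}, [… [a_{p_d v}, c_{uv}]…]]`. -/
def wEl {m n : ℕ} (u v : Fin n) (h : u ≠ v) : Ass m →ₗ[ℚ] edk m n :=
  liftWord fun l => adWApply v l (cGE u v h)

/-- `ad_w^{(l)}(ξ)`, linear in `w`. -/
def adOp {m n : ℕ} (l : Fin n) (ξ : edk m n) : Ass m →ₗ[ℚ] edk m n :=
  liftWord fun lst => adWApply l lst ξ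

/-- Degree-`k` part of the free Lie algebra (generators of degree 1), realized as the
preimage of the degree-`k` part of the free associative algebra under the canonical map. -/
def flHomog (X : Type) (k : ℕ) : Submodule ℚ (FreeLieAlgebra ℚ X) :=
  Submodule.comap
    (FreeLieAlgebra.lift ℚ (FreeAlgebra.ι ℚ (X := X)) :
      FreeLieAlgebra ℚ X →ₗ⁅ℚ⁆ FreeAlgebra ℚ X).toLinearMap
    (homogS X k)

/-- Degree-`k` part of `edk_{m,n}`. -/
def edkHomog (m n : ℕ) (k : ℕ) : Submodule ℚ (edk m n) :=
  (((flHomog (MIdx m n) k).map (mixIdeal m n).toSubmodule.mkQ)).map (eproj m n)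

-- Fin helper lemmas
lemma castSucc_ne_of_ne {n : ℕ} {u v : Fin n} (h : u ≠ v) :
    Fin.castSucc u ≠ Fin.castSucc v := fun hh => h (Fin.castSucc_injective n hh)

lemma succ_ne_of_ne {n : ℕ} {u v : Fin n} (h : u ≠ v) :
    Fin.succ u ≠ Fin.succ v := fun hh => h (Fin.succ_injective n hh)

lemma castSucc_ne_last {n : ℕ} (u : Fin n) : Fin.castSucc u ≠ Fin.last n :=
  (Fin.castSucc_lt_last u).ne

lemma castSucc_ne_succ_of_le {n : ℕ} {u v : Fin n} (h : u ≤ v) :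
    Fin.castSucc u ≠ Fin.succ v := by
  intro hh
  have hv := congrArg Fin.val hh
  simp only [Fin.coe_castSucc, Fin.val_succ] at hv
  have := Fin.le_def.mp h
  omega

/-- `D` is the pole coface map `δ_k : dk_{m,n} → dk_{m+1,n}`, `0 ≤ k ≤ m`
(1-indexed `k`; `k = 0` is extension on the left). -/
def IsDeltaPole (m n : ℕ) (k : ℕ) (D : dkmn m n →ₗ⁅ℚ⁆ dkmn (m + 1) n) : Prop :=
  (∀ (i : Fin m) (j : Fin n),
     (((i : ℕ) + 1 < k) → D (aG i j) = aG (Fin.castSucc i) j) ∧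
     (((i : ℕ) + 1 = k) → D (aG i j) = aG (Fin.castSucc i) j + aG (Fin.succ i) j) ∧
     ((k < (i : ℕ) + 1) → D (aG i j) = aG (Fin.succ i) j)) ∧
  (∀ (u v : Fin n) (h : u ≠ v), D (cG u v h) = cG u v h)

/-- `D` is the strand coface map `δ_{m+κ} : dk_{m,n} → dk_{m,n+1}`, `1 ≤ κ ≤ n+1`
(1-indexed strand `κ`; `κ = n+1` is extension on the right). -/
def IsDeltaStrand (m n : ℕ) (κ : ℕ) (D : dkmn m n →ₗ⁅ℚ⁆ dkmn m (n + 1)) : Prop :=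
  (∀ (i : Fin m) (j : Fin n),
     (((j : ℕ) + 1 < κ) → D (aG i j) = aG i (Fin.castSucc j)) ∧
     (((j : ℕ) + 1 = κ) → D (aG i j) = aG i (Fin.castSucc j) + aG i (Fin.succ j)) ∧
     ((κ < (j : ℕ) + 1) → D (aG i j) = aG i (Fin.succ j))) ∧
  (∀ (u v : Fin n) (h : u < v),
     (((v : ℕ) + 1 < κ) →
        D (cG u v h.ne) = cG (Fin.castSucc u) (Fin.castSucc v) (castSucc_ne_of_ne h.ne)) ∧
     (((v : ℕ) + 1 = κ) →
        D (cG u v h.ne) = cG (Fin.castSucc u) (Fin.castSucc v) (castSucc_ne_of_ne h.ne)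
          + cG (Fin.castSucc u) (Fin.succ v) (castSucc_ne_succ_of_le h.le)) ∧
     (((u : ℕ) + 1 < κ ∧ κ < (v : ℕ) + 1) →
        D (cG u v h.ne) = cG (Fin.castSucc u) (Fin.succ v) (castSucc_ne_succ_of_le h.le)) ∧
     (((u : ℕ) + 1 = κ) →
        D (cG u v h.ne) = cG (Fin.castSucc u) (Fin.succ v) (castSucc_ne_succ_of_le h.le)
          + cG (Fin.succ u) (Fin.succ v) (succ_ne_of_ne h.ne)) ∧
     ((κ < (u : ℕ) + 1) →
        D (cG u v h.ne) = cG (Fin.succ u) (Fin.succ v) (succ_ne_of_ne h.ne)))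

/-- `T` is `ϑ_{m+1} : dk_{m+1,n} → dk_{m,n+1}` (the last pole becomes the first strand). -/
def IsTheta (m n : ℕ) (T : dkmn (m + 1) n →ₗ⁅ℚ⁆ dkmn m (n + 1)) : Prop :=
  (∀ (i : Fin (m + 1)) (j : Fin n),
     (∀ hi : (i : ℕ) < m, T (aG i j) = aG ⟨i, hi⟩ (Fin.succ j)) ∧
     ((i : ℕ) = m → T (aG i j) = cG 0 (Fin.succ j) (Fin.succ_ne_zero j).symm)) ∧
  (∀ (u v : Fin n) (h : u ≠ v), T (cG u v h) = cG (Fin.succ u) (Fin.succ v) (succ_ne_of_ne h))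

/-- The coface map `d_k : dk_{m,n} → dk_{m,n+1}`, built from the data of the pole
cofaces, the strand cofaces, and `ϑ_{m+1}`. -/
def coface (m n : ℕ) (Dp : ℕ → (dkmn m n →ₗ⁅ℚ⁆ dkmn (m + 1) n))
    (Ds : ℕ → (dkmn m n →ₗ⁅ℚ⁆ dkmn m (n + 1)))
    (T : dkmn (m + 1) n →ₗ⁅ℚ⁆ dkmn m (n + 1)) (k : ℕ) :
    dkmn m n →ₗ⁅ℚ⁆ dkmn m (n + 1) :=
  if k ≤ m then T.comp (Dp k) else Ds (k - m)

/-- The algebra map `ass_{m'+1} → ass_{m'}` with `x_p ↦ x_p` (`p < m'`) and `x_{m'} ↦ 0`. -/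
def setLast0A (m' : ℕ) : Ass (m' + 1) →ₐ[ℚ] Ass m' :=
  FreeAlgebra.lift ℚ fun p : Fin (m' + 1) =>
    if h : (p : ℕ) < m' then gen ⟨p, h⟩ else 0

/-- The Lie algebra map `FreeLie (Fin (m'+1)) → FreeLie (Fin m')` setting the last
generator to `0`. -/
def flSetLast0 (m' : ℕ) : FreeLieAlgebra ℚ (Fin (m' + 1)) →ₗ⁅ℚ⁆ FreeLieAlgebra ℚ (Fin m') :=
  FreeLieAlgebra.lift ℚ fun p : Fin (m' + 1) =>
    if h : (p : ℕ) < m' then FreeLieAlgebra.of ℚ ⟨p, h⟩ else 0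

/-! Modulo `[c,c]` the image of `c` is abelian, and the 4T relations give
`[a_{pk}, c_{jk}] = -[a_{pj}, c_{jk}]` and `[a_{pk}, a_{pj}] ∈ c`, while `[a_{pk}, a_{qj}] = 0`
for `p ≠ q`. Hence `ad a_{pk}` commutes with every `ad a_{qj}` on the image of `c`: an outermost
`a_{pk}` can be moved past the `a_{·j}` already applied to `c_{jk}` and then traded for `-a_{pj}`.
Doing this letter by letter reverses the word and contributes one sign per letter, which is `ι`. -/

lemma basisFreeMonoid_apply_eq_wordProd {N : ℕ} (w : FreeMonoid (Fin N)) :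
    FreeAlgebra.basisFreeMonoid ℚ (Fin N) w = wordProd w.toList := by
  show _ = (w.toList.map (FreeAlgebra.ι ℚ)).prod
  simp [FreeAlgebra.basisFreeMonoid, FreeAlgebra.equivMonoidAlgebraFreeMonoid,
    FreeMonoid.lift_apply]

lemma liftWord_wordProd {N : ℕ} {A : Type} [AddCommGroup A] [Module ℚ A]
    (f : List (Fin N) → A) (l : List (Fin N)) : liftWord f (wordProd l) = f l := by
  rw [← FreeMonoid.toList_ofList l, ← basisFreeMonoid_apply_eq_wordProd, liftWord,
    Module.Basis.constr_basis]

lemma linearMap_ext_wordProd {N : ℕ} {A : Type} [AddCommGroup A] [Module ℚ A]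
    {f g : Ass N →ₗ[ℚ] A} (h : ∀ l, f (wordProd l) = g (wordProd l)) : f = g :=
  (FreeAlgebra.basisFreeMonoid ℚ (Fin N)).ext fun w => by
    rw [basisFreeMonoid_apply_eq_wordProd, h]

section Relations

variable {m n : ℕ}

local notation "mk" => LieSubmodule.Quotient.mk (N := mixIdeal m n)

lemma mk_eq_zero_of_mem_mixRels {z : FLmix m n} (hz : z ∈ mixRels m n) : mk z = 0 :=
  LieSubmodule.Quotient.mk_eq_zero'.mpr (LieSubmodule.subset_lieSpan hz)

lemma mk_tMix_comm (p q : Fin (m + n)) (h : p ≠ q) (hm : m ≤ (p : ℕ) ∨ m ≤ (q : ℕ)) :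
    mk (tMix p q h hm) = mk (tMix q p h.symm hm.symm) :=
  sub_eq_zero.mp (mk_eq_zero_of_mem_mixRels (Or.inl (Or.inl ⟨p, q, h, hm, rfl⟩)))

lemma lie_mk_tMix_eq_zero {p q r s : Fin (m + n)} (hpq : p ≠ q)
    (hmpq : m ≤ (p : ℕ) ∨ m ≤ (q : ℕ)) (hrs : r ≠ s) (hmrs : m ≤ (r : ℕ) ∨ m ≤ (s : ℕ))
    (hpr : p ≠ r) (hps : p ≠ s) (hqr : q ≠ r) (hqs : q ≠ s) :
    ⁅mk (tMix p q hpq hmpq), mk (tMix r s hrs hmrs)⁆ = 0 :=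
  mk_eq_zero_of_mem_mixRels
    (Or.inl (Or.inr ⟨p, q, r, s, hpq, hmpq, hrs, hmrs, hpr, hps, hqr, hqs, rfl⟩))

lemma lie_mk_tMix_add_mk_tMix_eq_zero {p q r : Fin (m + n)} (hpq : p ≠ q)
    (hmpq : m ≤ (p : ℕ) ∨ m ≤ (q : ℕ)) (hqr : q ≠ r) (hmqr : m ≤ (q : ℕ) ∨ m ≤ (r : ℕ))
    (hpr : p ≠ r) (hmpr : m ≤ (p : ℕ) ∨ m ≤ (r : ℕ)) :
    ⁅mk (tMix p q hpq hmpq) + mk (tMix q r hqr hmqr), mk (tMix p r hpr hmpr)⁆ = 0 :=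
  mk_eq_zero_of_mem_mixRels (Or.inr ⟨p, q, r, hpq, hmpq, hqr, hmqr, hpr, hmpr, rfl⟩)

lemma lie_aG_add_aG_cG (p : Fin m) {j k : Fin n} (h : j ≠ k) :
    ⁅aG p j + aG p k, cG (m := m) j k h⁆ = 0 := by
  have := lie_mk_tMix_add_mk_tMix_eq_zero (castAdd_ne_natAdd p j).symm
    (Or.inl (natAdd_le_left m j)) (castAdd_ne_natAdd p k) (Or.inr (natAdd_le_left m k))
    (natAdd_ne h) (Or.inl (natAdd_le_left m j))
  rwa [mk_tMix_comm (Fin.natAdd m j)] at this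

lemma lie_aG_aG_of_ne {p q : Fin m} (hpq : p ≠ q) {j k : Fin n} (h : j ≠ k) :
    ⁅aG p k, aG q j⁆ = 0 :=
  lie_mk_tMix_eq_zero _ _ _ _ ((Fin.castAdd_injective m n).ne hpq) (castAdd_ne_natAdd p j)
    (castAdd_ne_natAdd q k).symm (natAdd_ne h.symm)

lemma lie_aG_add_cG_aG (p : Fin m) {j k : Fin n} (h : j ≠ k) :
    ⁅aG p j + cG (m := m) j k h, aG p k⁆ = 0 :=
  lie_mk_tMix_add_mk_tMix_eq_zero _ _ _ _ _ _

end Relations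

section Emergent

variable {m n : ℕ}

def cIdE (m n : ℕ) : Submodule ℚ (edk m n) := (cId m n).toSubmodule.map (eproj m n)

lemma eprojF_mem_cIdE {z : dkmn m n} (hz : z ∈ cId m n) : eprojF m n z ∈ cIdE m n :=
  Submodule.mem_map_of_mem hz

lemma cGE_mem_cIdE {j k : Fin n} (h : j ≠ k) : cGE (m := m) j k h ∈ cIdE m n :=
  eprojF_mem_cIdE (LieSubmodule.subset_lieSpan ⟨j, k, h, rfl⟩)

lemma lie_mem_cIdE (x : edk m n) {ξ : edk m n} (hξ : ξ ∈ cIdE m n) : ⁅x, ξ⁆ ∈ cIdE m n := by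
  obtain ⟨z, hz, rfl⟩ := Submodule.mem_map.mp hξ
  obtain ⟨y, rfl⟩ := LieSubmodule.Quotient.surjective_mk' (ccId m n) x
  exact eprojF_mem_cIdE ((cId m n).lie_mem hz)

lemma lie_eq_zero_of_mem_cIdE {ξ ζ : edk m n} (hξ : ξ ∈ cIdE m n) (hζ : ζ ∈ cIdE m n) :
    ⁅ξ, ζ⁆ = 0 := by
  obtain ⟨x, hx, rfl⟩ := Submodule.mem_map.mp hξ
  obtain ⟨z, hz, rfl⟩ := Submodule.mem_map.mp hζ
  exact LieSubmodule.Quotient.mk_eq_zero'.mpr (LieSubmodule.lie_mem_lie hx hz)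

lemma lie_aGE_cGE_right (p : Fin m) {j k : Fin n} (h : j ≠ k) :
    ⁅aGE p k, cGE (m := m) j k h⁆ = -⁅aGE p j, cGE (m := m) j k h⁆ := by
  have h4T : ⁅aGE p j + aGE p k, cGE (m := m) j k h⁆ = 0 :=
    congrArg (eprojF m n) (lie_aG_add_aG_cG p h)
  exact eq_neg_of_add_eq_zero_right (by rwa [add_lie] at h4T)

lemma lie_aGE_aGE_of_ne {p q : Fin m} (hpq : p ≠ q) {j k : Fin n} (h : j ≠ k) :
    ⁅aGE p k, aGE q j⁆ = 0 :=
  congrArg (eprojF m n) (lie_aG_aG_of_ne hpq h)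

lemma lie_aGE_aGE_mem_cIdE (p : Fin m) {j k : Fin n} (h : j ≠ k) :
    ⁅aGE p k, aGE p j⁆ ∈ cIdE m n := by
  have h4T : ⁅aGE p j + cGE (m := m) j k h, aGE p k⁆ = 0 :=
    congrArg (eprojF m n) (lie_aG_add_cG_aG p h)
  rw [add_lie, add_eq_zero_iff_eq_neg, ← lie_skew, neg_inj] at h4T
  rw [h4T, ← lie_skew]
  exact neg_mem (lie_mem_cIdE _ (cGE_mem_cIdE h))

lemma adWApply_append (i : Fin n) (r s : List (Fin m)) (ξ : edk m n) :
    adWApply i (r ++ s) ξ = adWApply i r (adWApply i s ξ) := by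
  induction r with
  | nil => rfl
  | cons p t ih => simp only [List.cons_append, adWApply, ih]

lemma adWApply_neg (i : Fin n) (r : List (Fin m)) (ξ : edk m n) :
    adWApply i r (-ξ) = -adWApply i r ξ := by
  induction r with
  | nil => rfl
  | cons p t ih => simp only [adWApply, ih, lie_neg]

lemma adWApply_mem_cIdE (i : Fin n) (r : List (Fin m)) {ξ : edk m n} (hξ : ξ ∈ cIdE m n) :
    adWApply i r ξ ∈ cIdE m n := by
  induction r with
  | nil => exact hξ
  | cons p t ih => exact lie_mem_cIdE _ ih

lemma lie_lie_aGE_aGE_of_mem_cIdE (p q : Fin m) {j k : Fin n} (h : j ≠ k) {ξ : edk m n}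
    (hξ : ξ ∈ cIdE m n) : ⁅⁅aGE p k, aGE q j⁆, ξ⁆ = 0 := by
  rcases eq_or_ne p q with rfl | hpq
  · exact lie_eq_zero_of_mem_cIdE (lie_aGE_aGE_mem_cIdE p h) hξ
  · rw [lie_aGE_aGE_of_ne hpq h, zero_lie]

lemma lie_aGE_adWApply_of_mem_cIdE (p : Fin m) {j k : Fin n} (h : j ≠ k) (r : List (Fin m))
    {ξ : edk m n} (hξ : ξ ∈ cIdE m n) :
    ⁅aGE p k, adWApply j r ξ⁆ = adWApply j r ⁅aGE p k, ξ⁆ := by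
  induction r with
  | nil => rfl
  | cons q t ih =>
    rw [adWApply, leibniz_lie, lie_lie_aGE_aGE_of_mem_cIdE p q h (adWApply_mem_cIdE j t hξ),
      zero_add, ih, adWApply]

lemma adWApply_cGE_eq_neg_one_pow_smul_reverse {j k : Fin n} (h : j ≠ k) (l : List (Fin m)) :
    adWApply k l (cGE j k h) = ((-1 : ℚ) ^ l.length) • adWApply j l.reverse (cGE j k h) := by
  induction l with
  | nil => simp [adWApply]
  | cons p t ih =>
    rw [adWApply, ih, lie_smul, lie_aGE_adWApply_of_mem_cIdE p h _ (cGE_mem_cIdE h),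
      lie_aGE_cGE_right, adWApply_neg, List.reverse_cons, adWApply_append, List.length_cons,
      pow_succ, mul_neg_one, neg_smul, smul_neg]
    rfl

end Emergent

/-- `ad_w^{(k)}(c_{jk}) = ad_{ι(w)}^{(j)}(c_{jk})` in `edk_{m,n}`. -/
theorem statement9 (m n : ℕ) (w : Ass m) (j k : Fin n) (h : j ≠ k) :
    adOp k (cGE j k h) w = adOp j (cGE j k h) (iotaMap m w) := by
  have hcomp : adOp k (cGE (m := m) j k h) = (adOp j (cGE j k h)).comp (iotaMap m) :=
    linearMap_ext_wordProd fun l => by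
      simp only [LinearMap.comp_apply, adOp, iotaMap, liftWord_wordProd, map_smul]
      exact adWApply_cGE_eq_neg_one_pow_smul_reverse h l
  exact LinearMap.congr_fun hcomp w

end
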